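/- arXiv:1812.03669 — 5 statements merged into one kernel-verified Lean document; each statement's English description precedes it below -/
import Mathlib

section
/- Let (x1⁰, x2⁰) be a nonzero real fixed point of the evolution operator of E6(a2,a3) (e1·e1 = e1 + a2 e2, e2·e2 = a3 e1 + e2, with 1 - a2 a3 ≠ 0) and suppose x1⁰ ≠ 0 and x2⁰ ≠ 0. Then the evolution algebra with structure matrix [[2x1⁰, 2a3 x2⁰],[2a2 x1⁰, 2x2⁰]] (the Jacobian of the evolution operator at the fixed point) is isomorphic to E6(b2,b3) with b2 = a3(x2⁰/x1⁰)² and b3 = a2(x1⁰/x2⁰)², via the basis change ẽ1 = e1/(2x1⁰), ẽ2 = e2/(2x2⁰). -/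
/-- Multiplication of the evolution algebra with structure matrix `M`. -/
def evMul {n : ℕ} (M : Matrix (Fin n) (Fin n) ℝ) (x y : Fin n → ℝ) : Fin n → ℝ :=
  fun k => ∑ i, M i k * x i * y i

/-- The structure matrix of `E₆(a₂,a₃)`. -/
def E6 (a₂ a₃ : ℝ) : Matrix (Fin 2) (Fin 2) ℝ := ![![1, a₂], ![a₃, 1]]

/-! Rescaling the natural basis by `eᵢ ↦ dᵢ eᵢ` turns `eᵢ eᵢ = ∑ₖ Mᵢₖ eₖ` into
`(dᵢ eᵢ)(dᵢ eᵢ) = ∑ₖ (dᵢ² Mᵢₖ / dₖ) (dₖ eₖ)`, so the rescaled algebra has structure matrix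
`M'ᵢₖ = dᵢ² Mᵢₖ / dₖ`. For the Jacobian at `(x₁, x₂)` and `d = (1/(2x₁), 1/(2x₂))` this is
exactly `E₆(a₃(x₂/x₁)², a₂(x₁/x₂)²)`. -/

section DiagonalRescaling

variable {n : ℕ}

noncomputable def diagScale (d : Fin n → ℝ) (hd : ∀ i, d i ≠ 0) :
    (Fin n → ℝ) ≃ₗ[ℝ] (Fin n → ℝ) :=
  LinearEquiv.piCongrRight fun i => LinearEquiv.smulOfNeZero ℝ ℝ (d i) (hd i)

@[simp]
theorem diagScale_apply (d : Fin n → ℝ) (hd : ∀ i, d i ≠ 0) (v : Fin n → ℝ) (i : Fin n) :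
    diagScale d hd v i = d i * v i :=
  rfl

theorem diagScale_evMul {M M' : Matrix (Fin n) (Fin n) ℝ} (d : Fin n → ℝ)
    (hd : ∀ i, d i ≠ 0) (hM : ∀ i k, d k * M' i k = d i ^ 2 * M i k) (x y : Fin n → ℝ) :
    diagScale d hd (evMul M' x y) = evMul M (diagScale d hd x) (diagScale d hd y) := by
  funext k
  simp only [diagScale_apply, evMul, Finset.mul_sum]
  refine Finset.sum_congr rfl fun i _ => ?_
  linear_combination x i * y i * hM i k

end DiagonalRescaling

theorem stmt5_general (a₂ a₃ x₁ x₂ : ℝ)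
    (h₁ : x₁ ≠ 0) (h₂ : x₂ ≠ 0) :
    ∃ T : (Fin 2 → ℝ) ≃ₗ[ℝ] (Fin 2 → ℝ),
      (∀ x y, T (evMul (E6 (a₃ * (x₂ / x₁) ^ 2) (a₂ * (x₁ / x₂) ^ 2)) x y)
          = evMul (![![2 * x₁, 2 * a₃ * x₂], ![2 * a₂ * x₁, 2 * x₂]]) (T x) (T y)) ∧
      T ![1, 0] = ![1 / (2 * x₁), 0] ∧ T ![0, 1] = ![0, 1 / (2 * x₂)] := by
  have hd : ∀ i, ![1 / (2 * x₁), 1 / (2 * x₂)] i ≠ 0 := by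
    intro i; fin_cases i <;> simp [h₁, h₂]
  refine ⟨diagScale _ hd, diagScale_evMul _ hd ?_, ?_, ?_⟩
  · intro i k
    fin_cases i <;> fin_cases k <;> simp [E6] <;> field_simp
  all_goals funext k; fin_cases k <;> simp

/-- If `(x₁⁰,x₂⁰)` is a fixed point of the evolution operator of `E₆(a₂,a₃)` with both
coordinates nonzero, then the evolution algebra whose structure matrix is the Jacobian
`[[2x₁⁰, 2a₃x₂⁰],[2a₂x₁⁰, 2x₂⁰]]` is isomorphic to `E₆(b₂,b₃)` with
`b₂ = a₃(x₂⁰/x₁⁰)²`, `b₃ = a₂(x₁⁰/x₂⁰)²`, via `ẽ1 = e1/(2x₁⁰)`, `ẽ2 = e2/(2x₂⁰)`. -/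
theorem stmt5 (a₂ a₃ x₁ x₂ : ℝ) (hE : 1 - a₂ * a₃ ≠ 0)
    (h₁ : x₁ ≠ 0) (h₂ : x₂ ≠ 0)
    (hfix₁ : x₁ = x₁ ^ 2 + a₃ * x₂ ^ 2) (hfix₂ : x₂ = a₂ * x₁ ^ 2 + x₂ ^ 2) :
    ∃ T : (Fin 2 → ℝ) ≃ₗ[ℝ] (Fin 2 → ℝ),
      (∀ x y, T (evMul (E6 (a₃ * (x₂ / x₁) ^ 2) (a₂ * (x₁ / x₂) ^ 2)) x y)
          = evMul (![![2 * x₁, 2 * a₃ * x₂], ![2 * a₂ * x₁, 2 * x₂]]) (T x) (T y)) ∧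
      T ![1, 0] = ![1 / (2 * x₁), 0] ∧ T ![0, 1] = ![0, 1 / (2 * x₂)] :=
  stmt5_general a₂ a₃ x₁ x₂ h₁ h₂
end

section
/- The three-dimensional real evolution algebras E7 with structure matrix [[1,0,0],[1,0,0],[1,0,0]] and E8 with structure matrix [[1,0,0],[1,0,0],[-1,0,0]] are not isomorphic. -/
/-- The evolution algebras `E₇` (`[[1,0,0],[1,0,0],[1,0,0]]`) and `E₈`
(`[[1,0,0],[1,0,0],[-1,0,0]]`) are not isomorphic. -/
theorem stmt9 :
    ¬ ∃ T : (Fin 3 → ℝ) ≃ₗ[ℝ] (Fin 3 → ℝ),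
      ∀ x y, T (evMul (![![1, 0, 0], ![1, 0, 0], ![1, 0, 0]]) x y)
        = evMul (![![1, 0, 0], ![1, 0, 0], ![-1, 0, 0]]) (T x) (T y) := by
  rintro ⟨T, hT⟩
  have key : ∀ v : Fin 3 → ℝ, evMul (![![1, 0, 0], ![1, 0, 0], ![1, 0, 0]]) v v
      = (v 0 ^ 2 + v 1 ^ 2 + v 2 ^ 2) • (![1, 0, 0] : Fin 3 → ℝ) := by
    intro v; funext k
    fin_cases k <;> simp [evMul, Fin.sum_univ_three] <;> ring
  have hx := hT (T.symm ![0, 0, 1]) (T.symm ![0, 0, 1])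
  have hy := hT (T.symm ![1, 0, 0]) (T.symm ![1, 0, 0])
  rw [key, map_smul, T.apply_symm_apply] at hx
  rw [key, map_smul, T.apply_symm_apply] at hy
  have h1 := congrFun hx 0
  have h2 := congrFun hy 0
  simp [evMul, Fin.sum_univ_three] at h1 h2
  set u := T.symm ![0, 0, 1]
  set w := T.symm ![1, 0, 0]
  set t := T ![1, 0, 0] 0 with hts
  have ha : (0:ℝ) ≤ u 0 ^ 2 + u 1 ^ 2 + u 2 ^ 2 := by positivity
  have hb : (0:ℝ) ≤ w 0 ^ 2 + w 1 ^ 2 + w 2 ^ 2 := by positivity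
  have ht : t < 0 := by nlinarith
  nlinarith [mul_nonpos_of_nonneg_of_nonpos hb ht.le]
end

section
/- The three-dimensional real evolution algebras E12 (e1² = 0, e2² = e1, e3² = e1) and E13 (e1² = 0, e2² = e1, e3² = -e1) are not isomorphic over ℝ. -/
lemma evMul12_sq (x : Fin 3 → ℝ) :
    evMul (![![0, 0, 0], ![1, 0, 0], ![1, 0, 0]]) x x
      = (x 1 ^ 2 + x 2 ^ 2) • ![(1:ℝ), 0, 0] := by
  funext k
  fin_cases k <;>
    simp [evMul, Fin.sum_univ_three, Matrix.vecHead, Matrix.vecTail] <;> ring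

/-- The evolution algebras `E₁₂` (`e1² = 0, e2² = e1, e3² = e1`) and
`E₁₃` (`e1² = 0, e2² = e1, e3² = -e1`) are not isomorphic over `ℝ`. -/
theorem stmt11 :
    ¬ ∃ T : (Fin 3 → ℝ) ≃ₗ[ℝ] (Fin 3 → ℝ),
      ∀ x y, T (evMul (![![0, 0, 0], ![1, 0, 0], ![1, 0, 0]]) x y)
        = evMul (![![0, 0, 0], ![1, 0, 0], ![-1, 0, 0]]) (T x) (T y) := by
  rintro ⟨T, hT⟩
  set x := T.symm ![0, 1, 0] with hxdef
  set y := T.symm ![0, 0, 1] with hydef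
  have hTx : T x = ![0, 1, 0] := T.apply_symm_apply _
  have hTy : T y = ![0, 0, 1] := T.apply_symm_apply _
  have hx := hT x x
  have hy := hT y y
  rw [hTx] at hx
  rw [hTy] at hy
  have hx2 : evMul (![![0, 0, 0], ![1, 0, 0], ![-1, 0, 0]]) ![0,1,0] ![0,1,0]
      = ![(1:ℝ), 0, 0] := by
    funext k
    fin_cases k <;> simp [evMul, Fin.sum_univ_three]
  have hy2 : evMul (![![0, 0, 0], ![1, 0, 0], ![-1, 0, 0]]) ![0,0,1] ![0,0,1]
      = -![(1:ℝ), 0, 0] := by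
    funext k
    fin_cases k <;> simp [evMul, Fin.sum_univ_three]
  rw [hx2, evMul12_sq, map_smul] at hx
  rw [hy2, evMul12_sq, map_smul] at hy
  set a : ℝ := x 1 ^ 2 + x 2 ^ 2
  set b : ℝ := y 1 ^ 2 + y 2 ^ 2
  have ha : 0 ≤ a := by positivity
  have hb : 0 ≤ b := by positivity
  -- b • ![1,0,0] = b • a • T e1 = a • (- ![1,0,0])
  have key : b • ![(1:ℝ),0,0] = a • (-![(1:ℝ),0,0]) := by
    calc b • ![(1:ℝ),0,0] = b • (a • T ![(1:ℝ),0,0]) := by rw [hx]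
    _ = a • (b • T ![(1:ℝ),0,0]) := smul_comm _ _ _
    _ = a • (-![(1:ℝ),0,0]) := by rw [hy]
  have h0 := congrFun key 0
  simp at h0
  -- h0 : b = -a
  have ha0 : a = 0 ∧ b = 0 := by constructor <;> nlinarith
  rw [ha0.1] at hx
  simp at hx
  have := congrFun hx 0
  simp at this
end

section
/- Let E be the real evolution algebra with e1² = e1 + a2 e2 + a3 e3, e2² = 0, e3² = c2·e1² with c2 > 0 and 1 + c2 a3² ≠ 0. Then E is isomorphic to the evolution algebra with structure matrix [[1,0,0],[0,0,0],[1,0,0]], i.e., f1² = f1, f2² = 0, f3² = f1, via the natural basis f1 = (1/(1+c2a3²))·(e1 + a2 e2 + a3 e3)-type change described by B' = {e1 + a2 e2 + a3 e3, e2, -a3 c2 e1 + e2 + e3} followed by rescaling. -/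
section EvolutionAlgebra

variable {n m : ℕ}

def evMulBilin (M : Matrix (Fin n) (Fin n) ℝ) :
    (Fin n → ℝ) →ₗ[ℝ] (Fin n → ℝ) →ₗ[ℝ] (Fin n → ℝ) :=
  LinearMap.mk₂ ℝ (evMul M)
    (fun _ _ _ => funext fun _ => by simp only [evMul, Pi.add_apply, mul_add, add_mul, Finset.sum_add_distrib])
    (fun _ _ _ => funext fun _ => by
      simp only [evMul, Pi.smul_apply, smul_eq_mul, Finset.mul_sum]
      exact Finset.sum_congr rfl fun _ _ => by ring)
    (fun _ _ _ => funext fun _ => by simp only [evMul, Pi.add_apply, mul_add, Finset.sum_add_distrib])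
    (fun _ _ _ => funext fun _ => by
      simp only [evMul, Pi.smul_apply, smul_eq_mul, Finset.mul_sum]
      exact Finset.sum_congr rfl fun _ _ => by ring)

@[simp]
theorem evMulBilin_apply (M : Matrix (Fin n) (Fin n) ℝ) (x y : Fin n → ℝ) :
    evMulBilin M x y = evMul M x y := rfl

theorem evMul_single_single (M : Matrix (Fin n) (Fin n) ℝ) (i j : Fin n) :
    evMul M (Pi.single i 1) (Pi.single j 1) = if i = j then M i else 0 := by
  funext k
  split_ifs with hij
  · subst hij; simp [evMul, Pi.single_apply]
  · simp [evMul, Pi.single_apply, Ne.symm hij]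

theorem map_evMul_of_natural_basis (M : Matrix (Fin n) (Fin n) ℝ) (N : Matrix (Fin m) (Fin m) ℝ)
    (T : (Fin n → ℝ) →ₗ[ℝ] (Fin m → ℝ))
    (horth : Pairwise fun i j => evMul N (T (Pi.single i 1)) (T (Pi.single j 1)) = 0)
    (hsq : ∀ i, evMul N (T (Pi.single i 1)) (T (Pi.single i 1)) = ∑ k, M i k • T (Pi.single k 1))
    (x y : Fin n → ℝ) :
    T (evMul M x y) = evMul N (T x) (T y) := by
  have hbilin : (evMulBilin M).compr₂ T = (evMulBilin N).compl₁₂ T T := by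
    refine LinearMap.ext_basis (Pi.basisFun ℝ (Fin n)) (Pi.basisFun ℝ (Fin n)) fun i j => ?_
    simp only [LinearMap.compr₂_apply, LinearMap.compl₁₂_apply, evMulBilin_apply,
      Pi.basisFun_apply, evMul_single_single]
    by_cases hij : i = j
    · subst hij
      simp only [if_true, hsq, ← map_smul, ← map_sum]
      congr 1
      simpa using ((Pi.basisFun ℝ (Fin n)).sum_repr (M i)).symm
    · simp [hij, horth hij]
  simpa using LinearMap.congr_fun₂ hbilin x y

end EvolutionAlgebra

/-- The basis `B'` of the paper, rescaled; `r` stands for `√c₂`. -/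
noncomputable def naturalBasis (a₂ a₃ r : ℝ) : Fin 3 → Fin 3 → ℝ :=
  ![(1 + r ^ 2 * a₃ ^ 2)⁻¹ • ![1, a₂, a₃], ![0, 1, 0],
    ((1 + r ^ 2 * a₃ ^ 2) * r)⁻¹ • ![-(a₃ * r ^ 2), 1, 1]]

section NaturalBasis

variable {a₂ a₃ r : ℝ}

theorem det_naturalBasis (hr : r ≠ 0) (hs : 1 + r ^ 2 * a₃ ^ 2 ≠ 0) :
    (Matrix.of (naturalBasis a₂ a₃ r)).det = ((1 + r ^ 2 * a₃ ^ 2) * r)⁻¹ := by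
  simp only [Matrix.det_fin_three, naturalBasis, Matrix.of_apply, Matrix.cons_val',
    Matrix.cons_val_zero, Matrix.cons_val_one, Matrix.cons_val, Matrix.cons_val_fin_one,
    Matrix.smul_cons, Matrix.smul_empty, smul_eq_mul, Fin.isValue]
  field_simp
  ring

theorem evMul_naturalBasis_pairwise :
    Pairwise fun i j => evMul ![![1, a₂, a₃], ![0, 0, 0], ![r ^ 2, r ^ 2 * a₂, r ^ 2 * a₃]]
      (naturalBasis a₂ a₃ r i) (naturalBasis a₂ a₃ r j) = 0 := by
  intro i j hij
  funext k
  fin_cases i <;> fin_cases j <;> (try exact absurd rfl hij) <;> fin_cases k <;>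
    simp only [evMul, naturalBasis, Fin.sum_univ_three, Fin.isValue, Matrix.cons_val',
      Matrix.cons_val_zero, Matrix.cons_val_one, Matrix.cons_val, Matrix.cons_val_fin_one,
      Matrix.smul_cons, Matrix.smul_empty, smul_eq_mul, Pi.zero_apply,
      Fin.reduceFinMk, Fin.zero_eta, Fin.mk_one] <;>
    ring

theorem evMul_naturalBasis_self (hr : r ≠ 0) (hs : 1 + r ^ 2 * a₃ ^ 2 ≠ 0) (i : Fin 3) :
    evMul ![![1, a₂, a₃], ![0, 0, 0], ![r ^ 2, r ^ 2 * a₂, r ^ 2 * a₃]]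
      (naturalBasis a₂ a₃ r i) (naturalBasis a₂ a₃ r i) =
      ∑ k, (![![1, 0, 0], ![0, 0, 0], ![1, 0, 0]] : Matrix (Fin 3) (Fin 3) ℝ) i k •
        naturalBasis a₂ a₃ r k := by
  funext k
  fin_cases i <;> fin_cases k <;>
    simp only [evMul, naturalBasis, Fin.sum_univ_three, Fin.isValue, Matrix.cons_val',
      Matrix.cons_val_zero, Matrix.cons_val_one, Matrix.cons_val, Matrix.cons_val_fin_one,
      Matrix.smul_cons, Matrix.smul_empty, smul_eq_mul, Finset.sum_apply, Pi.smul_apply,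
      Fin.reduceFinMk, Fin.zero_eta, Fin.mk_one] <;>
    field_simp <;> ring

end NaturalBasis

/-- The real evolution algebra with `e1² = e1 + a₂e2 + a₃e3`, `e2² = 0`, `e3² = c₂·e1²`,
where `c₂ > 0` and `1 + c₂a₃² ≠ 0`, is isomorphic to the evolution algebra with structure
matrix `[[1,0,0],[0,0,0],[1,0,0]]`. -/
theorem stmt12 (a₂ a₃ c₂ : ℝ) (hc : c₂ > 0) (h : 1 + c₂ * a₃ ^ 2 ≠ 0) :
    ∃ T : (Fin 3 → ℝ) ≃ₗ[ℝ] (Fin 3 → ℝ),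
      ∀ x y, T (evMul (![![1, 0, 0], ![0, 0, 0], ![1, 0, 0]]) x y)
        = evMul (![![1, a₂, a₃], ![0, 0, 0], ![c₂, c₂ * a₂, c₂ * a₃]]) (T x) (T y) := by
  obtain ⟨r, hr, rfl⟩ : ∃ r, r ≠ 0 ∧ r ^ 2 = c₂ :=
    ⟨√c₂, (Real.sqrt_pos.2 hc).ne', Real.sq_sqrt hc.le⟩
  set P := (Matrix.of (naturalBasis a₂ a₃ r)).transpose
  have hP : IsUnit P.det := by
    rw [Matrix.det_transpose, det_naturalBasis hr h]
    exact IsUnit.mk0 _ (inv_ne_zero (mul_ne_zero h hr))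
  set T := P.toLinearEquiv' (P.invertibleOfIsUnitDet hP)
  have hcol (i : Fin 3) :
      (T : (Fin 3 → ℝ) →ₗ[ℝ] (Fin 3 → ℝ)) (Pi.single i 1) = naturalBasis a₂ a₃ r i := by
    rw [Matrix.toLinearEquiv'_apply, Matrix.toLin'_apply, Matrix.mulVec_single_one]
    rfl
  refine ⟨T, map_evMul_of_natural_basis _ _ _ ?_ ?_⟩
  · simpa only [hcol] using evMul_naturalBasis_pairwise
  · simpa only [hcol] using evMul_naturalBasis_self hr h
end

section
/- The real evolution algebra with structure matrix [[1,1,1],[-1,-1,-1],[0,0,0]] (e1² = e1+e2+e3, e2² = -(e1+e2+e3), e3² = 0) is isomorphic to the evolution algebra with structure matrix [[1,1,0],[-1,-1,0],[0,0,0]] via the natural basis change B''' = {e2, e1 + e3, e3}. -/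
noncomputable def Tiso : (Fin 3 → ℝ) ≃ₗ[ℝ] (Fin 3 → ℝ) where
  toFun x := ![x 0, x 1, x 0 + x 2]
  invFun y := ![y 0, y 1, y 2 - y 0]
  map_add' x y := by funext k; fin_cases k <;> simp <;> ring
  map_smul' c x := by funext k; fin_cases k <;> simp <;> ring
  left_inv x := by funext k; fin_cases k <;> simp
  right_inv y := by funext k; fin_cases k <;> simp

/-- The evolution algebra with structure matrix `[[1,1,1],[-1,-1,-1],[0,0,0]]` is
isomorphic to the one with structure matrix `[[1,1,0],[-1,-1,0],[0,0,0]]`, via a natural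
basis change whose basis vectors are taken from `B''' = {e2, e1 + e3, e3}`. -/
theorem stmt19 :
    ∃ T : (Fin 3 → ℝ) ≃ₗ[ℝ] (Fin 3 → ℝ),
      (∀ x y, T (evMul (![![1, 1, 0], ![-1, -1, 0], ![0, 0, 0]]) x y)
          = evMul (![![1, 1, 1], ![-1, -1, -1], ![0, 0, 0]]) (T x) (T y)) ∧
      ∀ i : Fin 3, T (Pi.single i 1) ∈
        ({![0, 1, 0], ![1, 0, 1], ![0, 0, 1]} : Set (Fin 3 → ℝ)) := by
  refine ⟨Tiso, fun x y => ?_, fun i => ?_⟩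
  · funext k
    fin_cases k <;>
      simp [Tiso, evMul, Fin.sum_univ_three, Matrix.cons_val_zero, Matrix.cons_val_one] <;>
      ring
  · have h : ∀ j : Fin 3, Tiso (Pi.single j 1) = ![![1,0,1], ![0,1,0], ![0,0,1]] j := by
      intro j
      fin_cases j <;> funext k <;> fin_cases k <;>
        simp [Tiso, Pi.single_apply, Matrix.vecHead, Matrix.vecTail]
    fin_cases i <;> rw [h] <;> simp
end
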